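/- For the Poincaré disc 𝔻 = {z ∈ ℂ : |z| < 1} with Poincaré distance ω and base point 0, every horofunction is of the form h(z) = ½ log( |ξ − z|² / (1 − |z|²) ) for some ξ ∈ ℂ with |ξ| = 1. -/

import Mathlib

/-- The inverse hyperbolic tangent, `tanh⁻¹ t = ½ log((1+t)/(1−t))`. -/
noncomputable def arctanh (t : ℝ) : ℝ := (1 / 2) * Real.log ((1 + t) / (1 - t))

/-- The Poincaré distance on the unit disc `𝔻 ⊂ ℂ`:
`ω(x,y) = tanh⁻¹ |(x−y)/(1−x̄y)|`. -/
noncomputable def poincareDist (x y : ℂ) : ℝ :=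
  arctanh (‖(x - y) / (1 - (starRingEnd ℂ x) * y)‖)

/-!
Writing `A = |z - y|` and `D = |1 - z̄y|`, the identity `D² - A² = (1 - |z|²)(1 - |y|²)` turns
`ω(z, y) - ω(0, y)` into `½ log((A + D)² / ((1 + |y|)²(1 - |z|²)))`, an expression continuous in
`y` up to the unit circle. By compactness a subsequence of `y_k` converges to some `ξ` in the closed
disc; `ω(0, y_k) → ∞` forces `|ξ| = 1`, and then `A, D → |ξ - z|`, which gives the formula.
-/

open Filter Topology ComplexConjugate

lemma norm_one_sub_conj_mul_sq_sub_norm_sub_sq (z y : ℂ) :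
    ‖1 - conj z * y‖ ^ 2 - ‖z - y‖ ^ 2 = (1 - ‖z‖ ^ 2) * (1 - ‖y‖ ^ 2) := by
  simp only [Complex.sq_norm, Complex.normSq_apply, Complex.sub_re, Complex.sub_im,
    Complex.mul_re, Complex.mul_im, Complex.one_re, Complex.one_im, Complex.conj_re,
    Complex.conj_im]
  ring

lemma norm_one_sub_conj_mul_of_norm_eq_one (z : ℂ) {ξ : ℂ} (hξ : ‖ξ‖ = 1) :
    ‖1 - conj z * ξ‖ = ‖ξ - z‖ := by
  have hξξ : ξ * conj ξ = 1 := by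
    rw [Complex.mul_conj, Complex.normSq_eq_norm_sq, hξ]; norm_num
  have : 1 - conj z * ξ = ξ * conj (ξ - z) := by
    rw [map_sub, mul_sub, hξξ]; ring
  rw [this, norm_mul, hξ, Complex.norm_conj, one_mul]

lemma one_add_div_div_one_sub_div {A D : ℝ} (hA : 0 ≤ A) (hAD : A < D) :
    (1 + A / D) / (1 - A / D) = (A + D) ^ 2 / (D ^ 2 - A ^ 2) := by
  have hDA : D ^ 2 - A ^ 2 ≠ 0 := by nlinarith
  field_simp [show D - A ≠ 0 by linarith, show D ≠ 0 by linarith]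
  ring

lemma poincareDist_eq_half_log {z y : ℂ} (hz : ‖z‖ < 1) (hy : ‖y‖ < 1) :
    poincareDist z y =
      1 / 2 * Real.log ((‖z - y‖ + ‖1 - conj z * y‖) ^ 2 / ((1 - ‖z‖ ^ 2) * (1 - ‖y‖ ^ 2))) := by
  have hkey := norm_one_sub_conj_mul_sq_sub_norm_sub_sq z y
  have hprod : 0 < (1 - ‖z‖ ^ 2) * (1 - ‖y‖ ^ 2) := by
    have := norm_nonneg z; have := norm_nonneg y
    apply mul_pos <;> nlinarith
  have hAD : ‖z - y‖ < ‖1 - conj z * y‖ :=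
    lt_of_pow_lt_pow_left₀ 2 (norm_nonneg _) (by linarith)
  rw [poincareDist, arctanh, norm_div, one_add_div_div_one_sub_div (norm_nonneg _) hAD, hkey]

lemma poincareDist_sub_poincareDist_zero {z y : ℂ} (hz : ‖z‖ < 1) (hy : ‖y‖ < 1) :
    poincareDist z y - poincareDist 0 y =
      1 / 2 * Real.log ((‖z - y‖ + ‖1 - conj z * y‖) ^ 2 / ((1 + ‖y‖) ^ 2 * (1 - ‖z‖ ^ 2))) := by
  have hz2 : 0 < 1 - ‖z‖ ^ 2 := by nlinarith [norm_nonneg z]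
  have hy1 : 0 < 1 - ‖y‖ := by linarith
  have hy2 : 0 < 1 + ‖y‖ := by linarith [norm_nonneg y]
  have hAD : 0 < ‖z - y‖ + ‖1 - conj z * y‖ := by
    have := norm_one_sub_conj_mul_sq_sub_norm_sub_sq z y
    nlinarith [norm_nonneg (z - y), norm_nonneg (1 - conj z * y), mul_pos hz2 (mul_pos hy1 hy2)]
  rw [poincareDist_eq_half_log hz hy, poincareDist_eq_half_log (by simp) hy, ← mul_sub]
  simp only [norm_zero, zero_sub, norm_neg, map_zero, zero_mul, sub_zero, norm_one, ne_eq,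
    OfNat.ofNat_ne_zero, not_false_eq_true, zero_pow, one_mul, add_comm _ (1 : ℝ)]
  generalize ‖z - y‖ + ‖1 - conj z * y‖ = S at *
  generalize ‖y‖ = a at *
  have ha2 : 0 < 1 - a ^ 2 := by nlinarith
  rw [← Real.log_div (div_pos (pow_pos hAD 2) (mul_pos hz2 ha2)).ne'
    (div_pos (pow_pos hy2 2) ha2).ne']
  congr 2
  field_simp [hy2.ne']

variable {ι : Type*} {l : Filter ι}

lemma Filter.Tendsto.arctanh {t : ι → ℝ} {c : ℝ} (ht : Tendsto t l (𝓝 c)) (hc : |c| < 1) :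
    Tendsto (fun k => arctanh (t k)) l (𝓝 (arctanh c)) := by
  obtain ⟨hc₁, hc₂⟩ := abs_lt.mp hc
  have hquot := ((tendsto_const_nhds (x := (1 : ℝ))).add ht).div
    ((tendsto_const_nhds (x := (1 : ℝ))).sub ht) (show (1 : ℝ) - c ≠ 0 by linarith)
  exact (hquot.log (div_pos (by linarith) (by linarith)).ne').const_mul _

lemma poincareDist_zero_left (y : ℂ) : poincareDist 0 y = arctanh ‖y‖ := by
  simp [poincareDist]

lemma norm_eq_one_of_tendsto_poincareDist_atTop [l.NeBot] {y : ι → ℂ} (hy : ∀ k, ‖y k‖ < 1)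
    (hyinf : Tendsto (fun k => poincareDist 0 (y k)) l atTop) {ξ : ℂ}
    (hyξ : Tendsto y l (𝓝 ξ)) : ‖ξ‖ = 1 := by
  have hnorm : Tendsto (fun k => ‖y k‖) l (𝓝 ‖ξ‖) := hyξ.norm
  refine (le_of_tendsto' hnorm fun k => (hy k).le).eq_or_lt.resolve_right fun hξ => ?_
  have hbounded := hnorm.arctanh (by rwa [abs_norm])
  simp only [← poincareDist_zero_left] at hbounded
  exact not_tendsto_nhds_of_tendsto_atTop hyinf _ hbounded

lemma tendsto_poincareDist_sub_poincareDist_zero {y : ι → ℂ} (hy : ∀ k, ‖y k‖ < 1) {ξ : ℂ}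
    (hξ : ‖ξ‖ = 1) (hyξ : Tendsto y l (𝓝 ξ)) {z : ℂ} (hz : ‖z‖ < 1) :
    Tendsto (fun k => poincareDist z (y k) - poincareDist 0 (y k)) l
      (𝓝 (1 / 2 * Real.log (‖ξ - z‖ ^ 2 / (1 - ‖z‖ ^ 2)))) := by
  have hz2 : 0 < 1 - ‖z‖ ^ 2 := by nlinarith [norm_nonneg z]
  have hξz : 0 < ‖ξ - z‖ := by
    rw [norm_pos_iff, sub_ne_zero]
    rintro rfl
    exact hz.ne hξ
  have hA : Tendsto (fun k => ‖z - y k‖) l (𝓝 ‖ξ - z‖) := by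
    rw [norm_sub_rev ξ]; exact (tendsto_const_nhds.sub hyξ).norm
  have hD : Tendsto (fun k => ‖1 - conj z * y k‖) l (𝓝 ‖ξ - z‖) := by
    rw [← norm_one_sub_conj_mul_of_norm_eq_one z hξ]
    exact (tendsto_const_nhds.sub (tendsto_const_nhds.mul hyξ)).norm
  have hquot := ((hA.add hD).pow 2).div
    (((tendsto_const_nhds (x := (1 : ℝ))).add hyξ.norm).pow 2 |>.mul
      (tendsto_const_nhds (x := 1 - ‖z‖ ^ 2))) (mul_ne_zero (by positivity) hz2.ne')
  have hlimit : (‖ξ - z‖ + ‖ξ - z‖) ^ 2 / ((1 + ‖ξ‖) ^ 2 * (1 - ‖z‖ ^ 2)) =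
      ‖ξ - z‖ ^ 2 / (1 - ‖z‖ ^ 2) := by
    rw [hξ]; field_simp
  rw [hlimit] at hquot
  refine ((hquot.log (by positivity)).const_mul _).congr fun k => ?_
  exact (poincareDist_sub_poincareDist_zero hz (hy k)).symm

/-- For the Poincaré disc with base point `0`, every horofunction, i.e. every
pointwise limit `h` of `z ↦ ω(z, y_k) − ω(0, y_k)` along a sequence `(y_k) ⊂ 𝔻` with
`ω(0, y_k) → ∞`, is of the form `h(z) = ½ log(|ξ − z|²/(1 − |z|²))` for some `ξ` with
`|ξ| = 1`. -/
theorem stmt9 (y : ℕ → ℂ) (hy : ∀ k, ‖y k‖ < 1)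
    (hyinf : Filter.Tendsto (fun k => poincareDist 0 (y k)) Filter.atTop Filter.atTop)
    (h : ℂ → ℝ)
    (hlim : ∀ z : ℂ, ‖z‖ < 1 →
      Filter.Tendsto (fun k => poincareDist z (y k) - poincareDist 0 (y k))
        Filter.atTop (nhds (h z))) :
    ∃ ξ : ℂ, ‖ξ‖ = 1 ∧ ∀ z : ℂ, ‖z‖ < 1 →
      h z = (1 / 2) * Real.log (‖ξ - z‖ ^ 2 / (1 - (‖z‖) ^ 2)) := by
  obtain ⟨ξ, -, φ, hφ, hyξ⟩ := (isCompact_closedBall (0 : ℂ) 1).tendsto_subseq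
    fun k => mem_closedBall_zero_iff.mpr (hy k).le
  have hξ : ‖ξ‖ = 1 :=
    norm_eq_one_of_tendsto_poincareDist_atTop (fun k => hy (φ k))
      (hyinf.comp hφ.tendsto_atTop) hyξ
  refine ⟨ξ, hξ, fun z hz => tendsto_nhds_unique ((hlim z hz).comp hφ.tendsto_atTop) ?_⟩
  exact tendsto_poincareDist_sub_poincareDist_zero (fun k => hy (φ k)) hξ hyξ hz
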